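/- Let θ ∈ (0, 1/2), y ∈ C([0,1], [0,∞)), α ≥ 0, βᵢ ≥ 0 with 0 < η₁ < ... < ηₙ < 1 and k := 1 − (α + Σᵢ βᵢ) > 0. Then the function u(t) = ∫₀¹ H(t,s) y(s) ds is nonnegative on [0,1] and satisfies min_{t ∈ [θ, 1−θ]} u(t) ≥ θ³(1−2θ) · sup_{t ∈ [0,1]} u(t). -/

import Mathlib

/-!
With `e s = s (1 - s)² / 6`, the Green's function satisfies `t³ e(s) ≤ G(t,s) ≤ e(s)` on the unit
square, and `H(t,s) - G(t,s)` is a nonnegative term independent of `t`. Hence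
`θ³ H(t',s) ≤ H(t,s)` whenever `θ ≤ t ≤ 1`, and integrating against `y ≥ 0` gives
`θ³ u(t') ≤ u(t)`, and `θ³ (1 - 2θ) ≤ θ³`.
-/

open Set intervalIntegral Filter

noncomputable def G (t s : ℝ) : ℝ :=
  if s ≤ t then (t^3*(1-s)^2 - (t-s)^3)/6 else t^3*(1-s)^2/6

noncomputable def e (s : ℝ) : ℝ := s*(1-s)^2/6

noncomputable def H (α k : ℝ) {n : ℕ} (β η : Fin n → ℝ) (t s : ℝ) : ℝ :=
  G t s + (α/k) * (∫ τ in (0:ℝ)..1, G τ s) + (1/k) * ∑ i, β i * G (η i) s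

lemma G_eq_max (t s : ℝ) : G t s = (t ^ 3 * (1 - s) ^ 2 - max (t - s) 0 ^ 3) / 6 := by
  unfold G
  split_ifs with h
  · rw [max_eq_left (by linarith)]
  · rw [max_eq_right (by linarith)]; ring

lemma continuous_G : Continuous fun p : ℝ × ℝ => G p.1 p.2 := by
  simp only [G_eq_max]; fun_prop

lemma e_nonneg {s : ℝ} (hs : s ∈ Icc (0:ℝ) 1) : 0 ≤ e s := by
  unfold e; obtain ⟨hs0, hs1⟩ := hs; positivity

lemma pow_three_mul_e_le_G {t s : ℝ} (ht : t ∈ Icc (0:ℝ) 1) (hs : s ∈ Icc (0:ℝ) 1) :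
    t ^ 3 * e s ≤ G t s := by
  obtain ⟨ht0, ht1⟩ := ht; obtain ⟨hs0, hs1⟩ := hs
  unfold G e
  split_ifs with h
  · nlinarith [pow_le_pow_left₀ (by linarith : (0:ℝ) ≤ t - s) (by nlinarith : t - s ≤ t * (1 - s)) 3,
      pow_nonneg (by linarith : (0:ℝ) ≤ t - s) 3]
  · nlinarith [mul_nonneg (pow_nonneg ht0 3) (pow_nonneg (by linarith : (0:ℝ) ≤ 1 - s) 3)]

lemma G_le_e {t s : ℝ} (ht : t ∈ Icc (0:ℝ) 1) (hs : s ∈ Icc (0:ℝ) 1) : G t s ≤ e s := by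
  obtain ⟨ht0, ht1⟩ := ht; obtain ⟨hs0, hs1⟩ := hs
  unfold G e
  split_ifs with h
  · nlinarith [mul_nonneg (mul_nonneg hs0 (sq_nonneg (1 - t)))
      (show (0:ℝ) ≤ (2 - s) * t + 1 - 2 * s by nlinarith)]
  · have ht3 : t ^ 3 ≤ t := by
      nlinarith [mul_nonneg ht0 ht0, mul_nonneg (mul_nonneg ht0 ht0) (by linarith : (0:ℝ) ≤ 1 - t)]
    nlinarith [mul_nonneg (by linarith : (0:ℝ) ≤ s - t ^ 3) (sq_nonneg (1 - s))]

lemma G_nonneg {t s : ℝ} (ht : t ∈ Icc (0:ℝ) 1) (hs : s ∈ Icc (0:ℝ) 1) : 0 ≤ G t s :=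
  (mul_nonneg (pow_nonneg ht.1 3) (e_nonneg hs)).trans (pow_three_mul_e_le_G ht hs)

lemma pow_three_mul_G_le {θ t t' s : ℝ} (hθ : 0 ≤ θ) (hθt : θ ≤ t) (ht : t ≤ 1)
    (ht' : t' ∈ Icc (0:ℝ) 1) (hs : s ∈ Icc (0:ℝ) 1) : θ ^ 3 * G t' s ≤ G t s :=
  calc θ ^ 3 * G t' s ≤ θ ^ 3 * e s := by gcongr; exact G_le_e ht' hs
    _ ≤ t ^ 3 * e s := by gcongr; exact e_nonneg hs
    _ ≤ G t s := pow_three_mul_e_le_G ⟨hθ.trans hθt, ht⟩ hs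

lemma continuous_H {α k : ℝ} {n : ℕ} (β η : Fin n → ℝ) (t : ℝ) : Continuous (H α k β η t) := by
  have hGt : ∀ t, Continuous (G t) := fun t => continuous_G.comp (.prodMk_right t)
  have hIntG : Continuous fun s => ∫ τ in (0:ℝ)..1, G τ s :=
    continuous_parametric_intervalIntegral_of_continuous' (f := fun s τ => G τ s)
      (continuous_G.comp continuous_swap) 0 1
  unfold H
  fun_prop

lemma H_sub_G_eq (α k : ℝ) {n : ℕ} (β η : Fin n → ℝ) (t t' s : ℝ) :
    H α k β η t s - G t s = H α k β η t' s - G t' s := by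
  unfold H; ring

lemma G_le_H {α k : ℝ} {n : ℕ} {β η : Fin n → ℝ} (hα : 0 ≤ α) (hβ : ∀ i, 0 ≤ β i)
    (hη : ∀ i, η i ∈ Icc (0:ℝ) 1) (hk : 0 < k) (t : ℝ) {s : ℝ} (hs : s ∈ Icc (0:ℝ) 1) :
    G t s ≤ H α k β η t s := by
  have hIntG : 0 ≤ ∫ τ in (0:ℝ)..1, G τ s :=
    integral_nonneg zero_le_one fun τ hτ => G_nonneg hτ hs
  have hSumG : 0 ≤ ∑ i, β i * G (η i) s :=
    Finset.sum_nonneg fun i _ => mul_nonneg (hβ i) (G_nonneg (hη i) hs)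
  unfold H
  have := mul_nonneg (div_nonneg hα hk.le) hIntG
  have := mul_nonneg (one_div_nonneg.2 hk.le) hSumG
  linarith

lemma pow_three_mul_H_le {α k : ℝ} {n : ℕ} {β η : Fin n → ℝ} (hα : 0 ≤ α) (hβ : ∀ i, 0 ≤ β i)
    (hη : ∀ i, η i ∈ Icc (0:ℝ) 1) (hk : 0 < k) {θ t t' s : ℝ} (hθ : 0 ≤ θ) (hθt : θ ≤ t)
    (ht : t ≤ 1) (ht' : t' ∈ Icc (0:ℝ) 1) (hs : s ∈ Icc (0:ℝ) 1) :
    θ ^ 3 * H α k β η t' s ≤ H α k β η t s := by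
  have hG := pow_three_mul_G_le hθ hθt ht ht' hs
  have hθ3 : θ ^ 3 ≤ 1 := pow_le_one₀ hθ (hθt.trans ht)
  have hrest := sub_nonneg.2 (G_le_H hα hβ hη hk t' hs)
  have := mul_le_of_le_one_left hrest hθ3
  linarith [H_sub_G_eq α k β η t t' s]

lemma const_mul_integral_le_of_kernel_le {K₁ K₂ y : ℝ → ℝ} {a b c : ℝ} (hab : a ≤ b)
    (hK₁ : Continuous K₁) (hK₂ : Continuous K₂) (hy : ContinuousOn y (Icc a b))
    (hy0 : ∀ s ∈ Icc a b, 0 ≤ y s) (hK : ∀ s ∈ Icc a b, c * K₁ s ≤ K₂ s) :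
    c * ∫ s in a..b, K₁ s * y s ≤ ∫ s in a..b, K₂ s * y s := by
  have hint : ∀ K : ℝ → ℝ, Continuous K →
      IntervalIntegrable (fun s => K s * y s) MeasureTheory.volume a b := fun K hK =>
    ContinuousOn.intervalIntegrable (by rw [uIcc_of_le hab]; exact hK.continuousOn.mul hy)
  rw [← integral_const_mul]
  refine integral_mono_on hab ((hint K₁ hK₁).const_mul c) (hint K₂ hK₂) fun s hs => ?_
  rw [← mul_assoc]
  exact mul_le_mul_of_nonneg_right (hK s hs) (hy0 s hs)

lemma mul_sSup_image_le {f : ℝ → ℝ} {S : Set ℝ} {b c : ℝ} (hS : S.Nonempty) (hc : 0 < c)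
    (h : ∀ x ∈ S, c * f x ≤ b) : c * sSup (f '' S) ≤ b := by
  rw [← le_div_iff₀' hc]
  refine csSup_le (hS.image f) ?_
  rintro _ ⟨x, hx, rfl⟩
  rw [le_div_iff₀' hc]
  exact h x hx

theorem stmt9_general (θ : ℝ) (hθ : θ ∈ Set.Ioo (0:ℝ) (1/2))
    (n : ℕ) (α : ℝ) (β η : Fin n → ℝ)
    (hα : 0 ≤ α) (hβ : ∀ i, 0 ≤ β i)
    (hη : ∀ i, η i ∈ Set.Ioo (0:ℝ) 1)
    (k : ℝ) (hk0 : 0 < k)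
    (y : ℝ → ℝ) (hy : ContinuousOn y (Set.Icc 0 1))
    (hynn : ∀ t ∈ Set.Icc (0:ℝ) 1, 0 ≤ y t)
    (u : ℝ → ℝ) (hu : ∀ t, u t = ∫ s in (0:ℝ)..1, H α k β η t s * y s) :
    (∀ t ∈ Set.Icc (0:ℝ) 1, 0 ≤ u t) ∧
    (∀ t ∈ Set.Icc θ (1-θ),
      θ^3 * (1-2*θ) * sSup (u '' Set.Icc (0:ℝ) 1) ≤ u t) := by
  obtain ⟨hθ0, -⟩ := hθ
  have hηI : ∀ i, η i ∈ Icc (0:ℝ) 1 := fun i => Ioo_subset_Icc_self (hη i)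
  have hu_nonneg : ∀ t ∈ Icc (0:ℝ) 1, 0 ≤ u t := fun t ht => by
    rw [hu]
    exact integral_nonneg zero_le_one fun s hs =>
      mul_nonneg ((G_nonneg ht hs).trans (G_le_H hα hβ hηI hk0 t hs)) (hynn s hs)
  refine ⟨hu_nonneg, fun t ht => ?_⟩
  have hu_le : ∀ t' ∈ Icc (0:ℝ) 1, θ ^ 3 * u t' ≤ u t := fun t' ht' => by
    rw [hu, hu]
    exact const_mul_integral_le_of_kernel_le zero_le_one (continuous_H β η t') (continuous_H β η t)
      hy hynn fun s hs => pow_three_mul_H_le hα hβ hηI hk0 hθ0.le ht.1 (by linarith [ht.2]) ht' hs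
  have hsup_nonneg : 0 ≤ sSup (u '' Icc (0:ℝ) 1) :=
    Real.sSup_nonneg (by rintro _ ⟨t', ht', rfl⟩; exact hu_nonneg t' ht')
  calc θ ^ 3 * (1 - 2 * θ) * sSup (u '' Icc (0:ℝ) 1) ≤ θ ^ 3 * sSup (u '' Icc (0:ℝ) 1) :=
        mul_le_mul_of_nonneg_right (mul_le_of_le_one_right (by positivity) (by linarith)) hsup_nonneg
    _ ≤ u t := mul_sSup_image_le (nonempty_Icc.2 zero_le_one) (by positivity) hu_le

theorem stmt9 (θ : ℝ) (hθ : θ ∈ Set.Ioo (0:ℝ) (1/2))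
    (n : ℕ) (α : ℝ) (β η : Fin n → ℝ)
    (hα : 0 ≤ α) (hβ : ∀ i, 0 ≤ β i)
    (hηmono : StrictMono η) (hη : ∀ i, η i ∈ Set.Ioo (0:ℝ) 1)
    (k : ℝ) (hk : k = 1 - (α + ∑ i, β i)) (hk0 : 0 < k)
    (y : ℝ → ℝ) (hy : ContinuousOn y (Set.Icc 0 1))
    (hynn : ∀ t ∈ Set.Icc (0:ℝ) 1, 0 ≤ y t)
    (u : ℝ → ℝ) (hu : ∀ t, u t = ∫ s in (0:ℝ)..1, H α k β η t s * y s) :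
    (∀ t ∈ Set.Icc (0:ℝ) 1, 0 ≤ u t) ∧
    (∀ t ∈ Set.Icc θ (1-θ),
      θ^3 * (1-2*θ) * sSup (u '' Set.Icc (0:ℝ) 1) ≤ u t) :=
  stmt9_general θ hθ n α β η hα hβ hη k hk0 y hy hynn u hu
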